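/- Let S = {x_1,...,x_n} be a gcd-closed set of distinct positive integers, e a positive integer, and let W = (w_{ij}) be the inverse of the power GCD matrix (S^e) = (gcd(x_i,x_j)^e). Then for all 1 ≤ i, j ≤ n: w_{ij} = Σ_{x_k ∈ S : x_i | x_k and x_j | x_k} c_{ik}·c_{jk} / α_{e,S}(x_k), where c_{ik} = Σ_{d·x_i | x_k, d·x_i ∤ x_t for all x_t ∈ S with x_t < x_k} μ(d) and α_{e,S}(x) = Σ_{d | x, d ∤ y for all y ∈ S with y < x} (ξ_e * μ)(d). -/
import Mathlib


open Finset

/-- `(ξ_e * μ)(d)`: Dirichlet convolution of `n ↦ n^e` with the Möbius function. -/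
def xiMu (e d : ℕ) : ℤ :=
  ∑ a ∈ d.divisors, (a : ℤ) ^ e * ArithmeticFunction.moebius (d / a)

/-- `α_{e,S}(x) = Σ_{d ∣ x, d ∤ y for all y ∈ S with y < x} (ξ_e * μ)(d)`. -/
def alphaES (e : ℕ) (S : Finset ℕ) (x : ℕ) : ℤ :=
  ∑ d ∈ x.divisors.filter (fun d => ∀ y ∈ S, y < x → ¬ d ∣ y), xiMu e d

/-- The set of greatest-type divisors of `x` in `S`. -/
def GS (S : Finset ℕ) (x : ℕ) : Finset ℕ :=
  S.filter (fun y => y ∣ x ∧ y < x ∧ ∀ z ∈ S, y ∣ z → z ∣ x → z = y ∨ z = x)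

/-- An element `x` satisfies condition 𝒞 relative to `S`. -/
def condCElem (S : Finset ℕ) (x : ℕ) : Prop :=
  ∀ y ∈ GS S x, ∀ z ∈ GS S x, y ≠ z → Nat.lcm y z = x ∧ Nat.gcd y z ∈ GS S y ∩ GS S z

/-- A set satisfies condition 𝒞 if every element with at least two
greatest-type divisors satisfies condition 𝒞. -/
def condCSet (S : Finset ℕ) : Prop :=
  ∀ x ∈ S, 2 ≤ (GS S x).card → condCElem S x

/-- `A_S(a,b) = {u ∈ S : a ∣ u ∣ b, u ≠ a}`. -/
def AS (S : Finset ℕ) (a b : ℕ) : Finset ℕ :=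
  S.filter (fun u => a ∣ u ∧ u ∣ b ∧ u ≠ a)

/-- `c_{rm}` (with `xr, xm` the actual elements): sum of `μ(d)` over `d` with
`d·xr ∣ xm` and `d·xr ∤ t` for all `t ∈ S` with `t < xm`. -/
def cCoef (S : Finset ℕ) (xr xm : ℕ) : ℤ :=
  ∑ d ∈ xm.divisors.filter (fun d => d * xr ∣ xm ∧ ∀ t ∈ S, t < xm → ¬ d * xr ∣ t),
    ArithmeticFunction.moebius d

/-- `g(k,m)` (with `xk, xm` the actual elements). -/
noncomputable def gFun (e : ℕ) (S : Finset ℕ) (xk xm : ℕ) : ℚ :=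
  (1 / (alphaES e S xm : ℚ)) *
    ∑ r ∈ S.filter (fun r => r ∣ xm), (cCoef S r xm : ℚ) * (Nat.lcm xk r : ℚ) ^ e

open ArithmeticFunction Matrix

lemma xiMu_eq (e d : ℕ) :
    xiMu e d = (((ArithmeticFunction.pow e : ArithmeticFunction ℕ) :
      ArithmeticFunction ℤ) * ArithmeticFunction.moebius) d := by
  unfold xiMu
  rw [ArithmeticFunction.mul_apply, ← Nat.sum_divisorsAntidiagonal
    (f := fun a b => (a : ℤ) ^ e * ArithmeticFunction.moebius b)]
  refine Finset.sum_congr rfl fun p hp => ?_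
  have h1 : p.1 ≠ 0 := by
    rcases Nat.mem_divisorsAntidiagonal.mp hp with ⟨h, hd⟩
    exact fun h0 => hd (by simp [← h, h0])
  rw [ArithmeticFunction.natCoe_apply, ArithmeticFunction.pow_apply,
    if_neg (fun hc => h1 hc.2)]
  push_cast
  ring

lemma sum_xiMu (e : ℕ) {g : ℕ} (hg : g ≠ 0) :
    ∑ d ∈ g.divisors, xiMu e d = (g : ℤ) ^ e := by
  simp only [xiMu_eq]
  rw [← ArithmeticFunction.coe_mul_zeta_apply, mul_assoc,
    ArithmeticFunction.moebius_mul_coe_zeta, mul_one, ArithmeticFunction.natCoe_apply,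
    ArithmeticFunction.pow_apply, if_neg (fun hc => hg hc.2)]
  push_cast; ring

lemma xiMu_pos {e : ℕ} (he : 0 < e) {d : ℕ} (hd : 0 < d) : 0 < xiMu e d := by
  have hmul : ArithmeticFunction.IsMultiplicative
      (((ArithmeticFunction.pow e : ArithmeticFunction ℕ) : ArithmeticFunction ℤ) *
        ArithmeticFunction.moebius) :=
    (ArithmeticFunction.isMultiplicative_pow.natCast).mul
      ArithmeticFunction.isMultiplicative_moebius
  rw [xiMu_eq, hmul.multiplicative_factorization _ hd.ne']
  rw [Finsupp.prod]
  apply Finset.prod_pos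
  intro p hp
  have hpp : p.Prime := Nat.prime_of_mem_primeFactors (by
    rwa [Nat.support_factorization] at hp)
  have hk : d.factorization p ≠ 0 := by
    simpa using (Finsupp.mem_support_iff.mp hp)
  obtain ⟨j, hj⟩ : ∃ j, d.factorization p = j + 1 :=
    ⟨d.factorization p - 1, (Nat.succ_pred_eq_of_pos (Nat.pos_of_ne_zero hk)).symm⟩
  rw [hj]
  rw [← xiMu_eq]
  show (0:ℤ) < ∑ a ∈ (p^(j+1)).divisors, (a : ℤ) ^ e * ArithmeticFunction.moebius ((p^(j+1)) / a)
  rw [Nat.sum_divisors_prime_pow hpp]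
  rw [Finset.sum_range_succ, Finset.sum_range_succ]
  have h0 : ∀ i ∈ Finset.range j,
      ((p ^ i : ℕ) : ℤ) ^ e * ArithmeticFunction.moebius (p ^ (j+1) / p ^ i) = 0 := by
    intro i hi
    have hij := Finset.mem_range.mp hi
    rw [Nat.pow_div (by omega) hpp.pos,
      ArithmeticFunction.moebius_apply_prime_pow hpp (by omega), if_neg (by omega)]
    ring
  rw [Finset.sum_eq_zero h0, zero_add]
  rw [Nat.pow_div (by omega) hpp.pos, Nat.pow_div (by omega) hpp.pos]
  have : j + 1 - j = 1 := by omega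
  rw [this, Nat.sub_self, pow_zero, pow_one,
    ArithmeticFunction.moebius_apply_prime hpp, ArithmeticFunction.moebius_apply_one]
  have hplt : (1:ℤ) < (p:ℤ) := by exact_mod_cast hpp.one_lt
  have : ((p:ℤ) ^ j) ^ e < ((p:ℤ) ^ (j+1)) ^ e := by
    apply pow_lt_pow_left₀ _ (by positivity) (by omega)
    · exact pow_lt_pow_right₀ hplt (by omega)
  push_cast
  nlinarith [this]

section Comb

variable {S : Finset ℕ}

lemma unique_min (hS0 : ∀ y ∈ S, 0 < y) (hSg : ∀ a ∈ S, ∀ b ∈ S, Nat.gcd a b ∈ S)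
    {b m : ℕ} (hb : b ∈ S) (hmb : m ∣ b) :
    ∃! y, y ∈ S ∧ y ∣ b ∧ m ∣ y ∧ ∀ t ∈ S, t < y → ¬ m ∣ t := by
  classical
  set T := S.filter (fun y => m ∣ y) with hT
  have hbT : b ∈ T := Finset.mem_filter.mpr ⟨hb, hmb⟩
  have hne : T.Nonempty := ⟨b, hbT⟩
  set y₀ := T.min' hne with hy₀
  have hy₀T : y₀ ∈ T := T.min'_mem hne
  have hy₀S : y₀ ∈ S := (Finset.mem_filter.mp hy₀T).1
  have hmy₀ : m ∣ y₀ := (Finset.mem_filter.mp hy₀T).2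
  have hmin : ∀ t ∈ S, t < y₀ → ¬ m ∣ t := by
    intro t ht hlt hmt
    exact absurd (T.min'_le t (Finset.mem_filter.mpr ⟨ht, hmt⟩)) (not_le.mpr hlt)
  refine ⟨y₀, ⟨hy₀S, ?_, hmy₀, hmin⟩, ?_⟩
  · have hg : Nat.gcd y₀ b ∈ S := hSg _ hy₀S _ hb
    have hmg : m ∣ Nat.gcd y₀ b := Nat.dvd_gcd hmy₀ hmb
    have h1 : y₀ ≤ Nat.gcd y₀ b := T.min'_le _ (Finset.mem_filter.mpr ⟨hg, hmg⟩)
    have h2 : Nat.gcd y₀ b ∣ y₀ := Nat.gcd_dvd_left _ _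
    have h3 : Nat.gcd y₀ b = y₀ := le_antisymm (Nat.le_of_dvd (hS0 _ hy₀S) h2) h1
    rw [← h3]; exact Nat.gcd_dvd_right _ _
  · rintro y ⟨hyS, hyb, hmy, hminy⟩
    have h1 : y₀ ≤ y := T.min'_le y (Finset.mem_filter.mpr ⟨hyS, hmy⟩)
    rcases lt_or_eq_of_le h1 with h | h
    · exact absurd hmy₀ (hminy y₀ hy₀S h)
    · exact h.symm

lemma sum_alpha (hS0 : ∀ y ∈ S, 0 < y) (hSg : ∀ a ∈ S, ∀ b ∈ S, Nat.gcd a b ∈ S)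
    (e : ℕ) {g : ℕ} (hg : g ∈ S) :
    ∑ y ∈ S.filter (fun y => y ∣ g), alphaES e S y = (g : ℤ) ^ e := by
  classical
  have hg0 : g ≠ 0 := (hS0 g hg).ne'
  unfold alphaES
  have step1 : ∀ y ∈ S.filter (fun y => y ∣ g),
      y.divisors.filter (fun d => ∀ t ∈ S, t < y → ¬ d ∣ t)
        = g.divisors.filter (fun d => d ∣ y ∧ ∀ t ∈ S, t < y → ¬ d ∣ t) := by
    intro y hy
    rcases Finset.mem_filter.mp hy with ⟨hyS, hyg⟩
    ext d
    simp only [Finset.mem_filter, Nat.mem_divisors]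
    constructor
    · rintro ⟨⟨hdy, _⟩, hP⟩
      exact ⟨⟨hdy.trans hyg, hg0⟩, hdy, hP⟩
    · rintro ⟨⟨_, _⟩, hdy, hP⟩
      exact ⟨⟨hdy, (hS0 y hyS).ne'⟩, hP⟩
  rw [Finset.sum_congr rfl (fun y hy => by rw [step1 y hy])]
  rw [Finset.sum_congr rfl (fun y _ => Finset.sum_filter _ _)]
  rw [Finset.sum_comm]
  have key : ∀ d ∈ g.divisors,
      (∑ y ∈ S.filter (fun y => y ∣ g),
        if d ∣ y ∧ ∀ t ∈ S, t < y → ¬ d ∣ t then xiMu e d else 0) = xiMu e d := by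
    intro d hd
    obtain ⟨hdg, -⟩ := Nat.mem_divisors.mp hd
    obtain ⟨y₀, hy₀, huniq⟩ := unique_min hS0 hSg hg hdg
    rw [← Finset.sum_filter]
    have hsing : (S.filter (fun y => y ∣ g)).filter
        (fun y => d ∣ y ∧ ∀ t ∈ S, t < y → ¬ d ∣ t) = {y₀} := by
      apply Finset.eq_singleton_iff_unique_mem.mpr
      constructor
      · exact Finset.mem_filter.mpr ⟨Finset.mem_filter.mpr ⟨hy₀.1, hy₀.2.1⟩,
          hy₀.2.2.1, hy₀.2.2.2⟩
      · intro z hz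
        simp only [Finset.mem_filter] at hz
        exact huniq z ⟨hz.1.1, hz.1.2, hz.2.1, hz.2.2⟩
    rw [hsing, Finset.sum_singleton]
  rw [Finset.sum_congr rfl key]
  exact sum_xiMu e hg0

lemma cCoef_eq_zero {a y : ℕ} (h : ¬ a ∣ y) : cCoef S a y = 0 := by
  apply Finset.sum_eq_zero
  intro d hd
  rcases Finset.mem_filter.mp hd with ⟨-, hda, -⟩
  exact absurd ((dvd_mul_left a d).trans hda) h

lemma sum_cCoef (hS0 : ∀ y ∈ S, 0 < y) (hSg : ∀ a ∈ S, ∀ b ∈ S, Nat.gcd a b ∈ S)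
    {a b : ℕ} (hb : b ∈ S) (hab : a ∣ b) :
    ∑ y ∈ S.filter (fun y => a ∣ y ∧ y ∣ b), cCoef S a y = if a = b then 1 else 0 := by
  classical
  have hb0 : b ≠ 0 := (hS0 b hb).ne'
  have ha0 : a ≠ 0 := by rintro rfl; exact hb0 (zero_dvd_iff.mp hab)
  unfold cCoef
  have step1 : ∀ y ∈ S.filter (fun y => a ∣ y ∧ y ∣ b),
      y.divisors.filter (fun d => d * a ∣ y ∧ ∀ t ∈ S, t < y → ¬ d * a ∣ t)
        = b.divisors.filter (fun d => d * a ∣ y ∧ ∀ t ∈ S, t < y → ¬ d * a ∣ t) := by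
    intro y hy
    rcases Finset.mem_filter.mp hy with ⟨hyS, -, hyb⟩
    ext d
    simp only [Finset.mem_filter, Nat.mem_divisors]
    constructor
    · rintro ⟨⟨hdy, -⟩, h2⟩
      exact ⟨⟨hdy.trans hyb, hb0⟩, h2⟩
    · rintro ⟨⟨-, -⟩, h2⟩
      exact ⟨⟨(dvd_mul_right d a).trans h2.1, (hS0 y hyS).ne'⟩, h2⟩
  rw [Finset.sum_congr rfl (fun y hy => by rw [step1 y hy])]
  rw [Finset.sum_congr rfl (fun y _ => Finset.sum_filter _ _)]
  rw [Finset.sum_comm]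
  have key : ∀ d ∈ b.divisors,
      (∑ y ∈ S.filter (fun y => a ∣ y ∧ y ∣ b),
        if d * a ∣ y ∧ ∀ t ∈ S, t < y → ¬ d * a ∣ t
          then (ArithmeticFunction.moebius d : ℤ) else 0)
        = if d * a ∣ b then (ArithmeticFunction.moebius d : ℤ) else 0 := by
    intro d hd
    by_cases hdab : d * a ∣ b
    · rw [if_pos hdab, ← Finset.sum_filter]
      obtain ⟨y₀, hy₀, huniq⟩ := unique_min hS0 hSg hb hdab
      have hsing : (S.filter (fun y => a ∣ y ∧ y ∣ b)).filter
          (fun y => d * a ∣ y ∧ ∀ t ∈ S, t < y → ¬ d * a ∣ t) = {y₀} := by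
        apply Finset.eq_singleton_iff_unique_mem.mpr
        constructor
        · exact Finset.mem_filter.mpr ⟨Finset.mem_filter.mpr
            ⟨hy₀.1, (dvd_mul_left a d).trans hy₀.2.2.1, hy₀.2.1⟩, hy₀.2.2.1, hy₀.2.2.2⟩
        · intro z hz
          simp only [Finset.mem_filter] at hz
          exact huniq z ⟨hz.1.1, hz.1.2.2, hz.2.1, hz.2.2⟩
      rw [hsing, Finset.sum_singleton]
    · rw [if_neg hdab]
      apply Finset.sum_eq_zero
      intro y hy
      rw [if_neg]
      rintro ⟨h1, -⟩
      exact hdab (h1.trans (Finset.mem_filter.mp hy).2.2)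
  rw [Finset.sum_congr rfl key, ← Finset.sum_filter]
  have hba : b.divisors.filter (fun d => d * a ∣ b) = (b / a).divisors := by
    ext d
    simp only [Finset.mem_filter, Nat.mem_divisors]
    constructor
    · rintro ⟨⟨-, -⟩, hdab⟩
      refine ⟨(Nat.dvd_div_iff_mul_dvd hab).mpr (by rwa [mul_comm]), ?_⟩
      intro h0
      have := Nat.mul_div_cancel' hab
      rw [h0, mul_zero] at this
      exact hb0 this.symm
    · rintro ⟨hd, -⟩
      have hdab : d * a ∣ b := by
        have := (Nat.dvd_div_iff_mul_dvd hab).mp hd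
        rwa [mul_comm] at this
      exact ⟨⟨(dvd_mul_right d a).trans hdab, hb0⟩, hdab⟩
  rw [hba]
  have hsum : ∑ d ∈ (b / a).divisors, (ArithmeticFunction.moebius d : ℤ)
      = if b / a = 1 then 1 else 0 := by
    calc ∑ d ∈ (b / a).divisors, (ArithmeticFunction.moebius d : ℤ)
        = (ArithmeticFunction.moebius * ArithmeticFunction.zeta :
            ArithmeticFunction ℤ) (b / a) :=
          (ArithmeticFunction.coe_mul_zeta_apply).symm
      _ = (1 : ArithmeticFunction ℤ) (b / a) := by
          rw [ArithmeticFunction.moebius_mul_coe_zeta]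
      _ = if b / a = 1 then 1 else 0 := ArithmeticFunction.one_apply
  rw [hsum]
  congr 1
  simp only [eq_iff_iff]
  constructor
  · intro h1
    have := Nat.mul_div_cancel' hab
    rw [h1, mul_one] at this
    exact this
  · rintro rfl
    exact Nat.div_self (Nat.pos_of_ne_zero hb0)

lemma alphaES_pos (hS0 : ∀ y ∈ S, 0 < y) {e : ℕ} (he : 0 < e) {z : ℕ} (hz : 0 < z) :
    0 < alphaES e S z := by
  classical
  apply Finset.sum_pos
  · intro d hd
    exact xiMu_pos he (Nat.pos_of_mem_divisors (Finset.mem_filter.mp hd).1)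
  · refine ⟨z, Finset.mem_filter.mpr ⟨Nat.mem_divisors_self z hz.ne', ?_⟩⟩
    intro t htS hlt hdvd
    exact absurd (Nat.le_of_dvd (hS0 t htS) hdvd) (not_le.mpr hlt)

end Comb

lemma sum_image_filter {n : ℕ} {β : Type*} [AddCommMonoid β] (x : Fin n → ℕ)
    (hinj : Function.Injective x) (p : ℕ → Prop) [DecidablePred p] (f : ℕ → β) :
    ∑ y ∈ (Finset.univ.image x).filter p, f y
      = ∑ k ∈ Finset.univ.filter (fun k => p (x k)), f (x k) := by
  rw [Finset.filter_image, Finset.sum_image (fun a _ b _ h => hinj h)]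

theorem inverse_power_gcd_matrix (n e : ℕ) (he : 0 < e) (x : Fin n → ℕ)
    (hinj : Function.Injective x) (hpos : ∀ i, 0 < x i)
    (hgcd : ∀ i j : Fin n, ∃ t, x t = Nat.gcd (x i) (x j)) :
    (Matrix.of fun i j : Fin n => ((Nat.gcd (x i) (x j) : ℕ) : ℚ) ^ e) *
      (Matrix.of fun i j : Fin n =>
        ∑ k ∈ Finset.univ.filter (fun k : Fin n => x i ∣ x k ∧ x j ∣ x k),
          (cCoef (Finset.univ.image x) (x i) (x k) : ℚ) *
            (cCoef (Finset.univ.image x) (x j) (x k) : ℚ) /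
            (alphaES e (Finset.univ.image x) (x k) : ℚ)) = 1 := by
  classical
  set S : Finset ℕ := Finset.univ.image x with hSdef
  have hmemS : ∀ i : Fin n, x i ∈ S := fun i => Finset.mem_image.mpr ⟨i, Finset.mem_univ i, rfl⟩
  have hS0 : ∀ y ∈ S, 0 < y := by
    intro y hy
    obtain ⟨i, -, rfl⟩ := Finset.mem_image.mp hy
    exact hpos i
  have hSg : ∀ a ∈ S, ∀ b ∈ S, Nat.gcd a b ∈ S := by
    intro a ha b hb
    obtain ⟨i, -, rfl⟩ := Finset.mem_image.mp ha
    obtain ⟨j, -, rfl⟩ := Finset.mem_image.mp hb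
    obtain ⟨t, ht⟩ := hgcd i j
    exact ht ▸ hmemS t
  have hane : ∀ k : Fin n, (alphaES e S (x k) : ℚ) ≠ 0 := fun k => by
    exact_mod_cast (alphaES_pos hS0 he (hpos k)).ne'
  set E : Matrix (Fin n) (Fin n) ℚ :=
    Matrix.of (fun i k => if x k ∣ x i then 1 else 0) with hE
  set D : Matrix (Fin n) (Fin n) ℚ :=
    Matrix.diagonal (fun k => (alphaES e S (x k) : ℚ)) with hD
  set D' : Matrix (Fin n) (Fin n) ℚ :=
    Matrix.diagonal (fun k => ((alphaES e S (x k) : ℚ))⁻¹) with hD'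
  set C : Matrix (Fin n) (Fin n) ℚ :=
    Matrix.of (fun i k => ((cCoef S (x i) (x k) : ℤ) : ℚ)) with hC
  have hA : (Matrix.of fun i j : Fin n => ((Nat.gcd (x i) (x j) : ℕ) : ℚ) ^ e)
      = E * D * Eᵀ := by
    ext i j
    have hgS : Nat.gcd (x i) (x j) ∈ S := hSg _ (hmemS i) _ (hmemS j)
    rw [Matrix.mul_apply]
    simp only [hE, hD, Matrix.mul_diagonal, Matrix.transpose_apply, Matrix.of_apply]
    have hterm : ∀ k : Fin n,
        (if x k ∣ x i then (1:ℚ) else 0) * (alphaES e S (x k) : ℚ)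
          * (if x k ∣ x j then 1 else 0)
        = if x k ∣ Nat.gcd (x i) (x j) then ((alphaES e S (x k) : ℤ) : ℚ) else 0 := by
      intro k
      by_cases h1 : x k ∣ x i <;> by_cases h2 : x k ∣ x j <;>
        simp [h1, h2, Nat.dvd_gcd_iff]
    rw [Finset.sum_congr rfl (fun k _ => hterm k), ← Finset.sum_filter,
      ← sum_image_filter x hinj (fun y => y ∣ Nat.gcd (x i) (x j))
        (fun y => ((alphaES e S y : ℤ) : ℚ)), ← hSdef, ← Int.cast_sum,
      sum_alpha hS0 hSg e hgS]
    push_cast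
    rfl
  have hCE : C * Eᵀ = 1 := by
    ext i m
    rw [Matrix.mul_apply, Matrix.one_apply]
    simp only [hC, hE, Matrix.transpose_apply, Matrix.of_apply]
    have hterm : ∀ k : Fin n,
        ((cCoef S (x i) (x k) : ℤ) : ℚ) * (if x k ∣ x m then (1:ℚ) else 0)
        = if x i ∣ x k ∧ x k ∣ x m then ((cCoef S (x i) (x k) : ℤ) : ℚ) else 0 := by
      intro k
      by_cases h1 : x i ∣ x k
      · by_cases h2 : x k ∣ x m <;> simp [h1, h2]
      · rw [cCoef_eq_zero (S := S) h1]
        simp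
    rw [Finset.sum_congr rfl (fun k _ => hterm k), ← Finset.sum_filter,
      ← sum_image_filter x hinj (fun y => x i ∣ y ∧ y ∣ x m)
        (fun y => ((cCoef S (x i) y : ℤ) : ℚ)), ← hSdef]
    by_cases him : x i ∣ x m
    · rw [← Int.cast_sum, sum_cCoef hS0 hSg (hmemS m) him]
      by_cases h : i = m
      · simp [h]
      · have hxim : x i ≠ x m := fun hc => h (hinj hc)
        simp [h, hxim]
    · have hempty : S.filter (fun y => x i ∣ y ∧ y ∣ x m) = ∅ :=
        Finset.filter_false_of_mem (fun y _ => by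
          rintro ⟨h1, h2⟩; exact him (h1.trans h2))
      rw [hempty, Finset.sum_empty]
      have hne : i ≠ m := fun h => him (h ▸ dvd_refl (x i))
      simp [hne]
  have hW : (Matrix.of fun i j : Fin n =>
      ∑ k ∈ Finset.univ.filter (fun k : Fin n => x i ∣ x k ∧ x j ∣ x k),
        (cCoef S (x i) (x k) : ℚ) * (cCoef S (x j) (x k) : ℚ) /
          (alphaES e S (x k) : ℚ)) = C * D' * Cᵀ := by
    ext i j
    rw [Matrix.mul_apply]
    simp only [hC, hD', Matrix.mul_diagonal, Matrix.transpose_apply, Matrix.of_apply]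
    rw [Finset.sum_filter]
    apply Finset.sum_congr rfl
    intro k _
    by_cases h1 : x i ∣ x k
    · by_cases h2 : x j ∣ x k
      · rw [if_pos ⟨h1, h2⟩, div_eq_mul_inv]
        ring
      · rw [if_neg (by tauto), cCoef_eq_zero (S := S) h2]
        simp
    · rw [if_neg (by tauto), cCoef_eq_zero (S := S) h1]
      simp
  rw [hA, hW]
  have hEC : Eᵀ * C = 1 := mul_eq_one_comm.mp hCE
  have hECt : E * Cᵀ = 1 := by
    have h := congrArg Matrix.transpose hCE
    rwa [Matrix.transpose_mul, Matrix.transpose_transpose, Matrix.transpose_one] at h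
  have hDD' : D * D' = 1 := by
    rw [hD, hD', Matrix.diagonal_mul_diagonal]
    rw [show (fun k => (alphaES e S (x k) : ℚ) * ((alphaES e S (x k) : ℚ))⁻¹)
      = fun _ => (1:ℚ) from funext fun k => mul_inv_cancel₀ (hane k)]
    exact Matrix.diagonal_one
  calc E * D * Eᵀ * (C * D' * Cᵀ)
      = E * ((D * (Eᵀ * C)) * (D' * Cᵀ)) := by simp only [Matrix.mul_assoc]
    _ = E * (D * (D' * Cᵀ)) := by rw [hEC, Matrix.mul_one]
    _ = E * (D * D' * Cᵀ) := by rw [Matrix.mul_assoc]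
    _ = E * Cᵀ := by rw [hDD', Matrix.one_mul]
    _ = 1 := hECt
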